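/- arXiv:0812.2867 — 3 statements merged into one kernel-verified Lean document; each statement's English description precedes it below -/
import Mathlib

section
/- Define sets S_m ⊆ ℝ recursively by A_0^{(m)} = {m/(m-1)}, A_{k+1}^{(m)} = {z ∈ ℝ : 2mz - m(m-1)z² ∈ A_k^{(m)}}, and S_m = {0} ∪ ⋃_{k≥0} A_k^{(m)}. Then S_m ⊆ [0, 2/(m-1)) ∪ {m/(m-1)} for every m ≥ 3. -/
/-!
Writing `R(z) = m z (2 - (m - 1) z)`, the preimage of a positive number under `R` lies in
`(0, 2/(m-1))`. Since `A_0 = {m/(m-1)}` is positive, induction on `k` puts every `A_{k+1}` in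
that interval.
-/

open Set

lemma mem_Ioo_of_decimation_pos {m z : ℝ} (hm : 1 < m)
    (h : 0 < 2 * m * z - m * (m - 1) * z ^ 2) : z ∈ Ioo 0 (2 / (m - 1)) := by
  have hc : 0 < m - 1 := by linarith
  have hfactor : 0 < z * (2 - (m - 1) * z) := by
    have : 2 * m * z - m * (m - 1) * z ^ 2 = m * (z * (2 - (m - 1) * z)) := by ring
    rw [this] at h
    exact pos_of_mul_pos_right h (by linarith)
  rcases pos_and_pos_or_neg_and_neg_of_mul_pos hfactor with ⟨hz, hlt⟩ | ⟨hz, hlt⟩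
  · exact ⟨hz, by rw [lt_div_iff₀ hc]; linarith⟩
  · nlinarith

lemma decimation_preimages_subset {m : ℝ} (hm : 1 < m) (A : ℕ → Set ℝ)
    (hA0 : A 0 = {m / (m - 1)})
    (hAk : ∀ k : ℕ, A (k + 1) = {z : ℝ | 2 * m * z - m * (m - 1) * z ^ 2 ∈ A k}) (k : ℕ) :
    A k ⊆ Ioo 0 (2 / (m - 1)) ∪ {m / (m - 1)} := by
  induction k with
  | zero => rw [hA0]; exact subset_union_right
  | succ k ih =>
    rw [hAk k]
    intro z hz
    refine Or.inl (mem_Ioo_of_decimation_pos hm ?_)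
    rcases ih hz with hR | hR
    · exact hR.1
    · rw [mem_singleton_iff.mp hR]
      exact div_pos (by linarith) (by linarith)

theorem stmt_16 (m : ℕ) (hm : 3 ≤ m) (A : ℕ → Set ℝ) (S : Set ℝ)
    (hA0 : A 0 = {(m : ℝ)/((m : ℝ) - 1)})
    (hAk : ∀ k : ℕ, A (k + 1) = {z : ℝ | 2 * m * z - m * ((m : ℝ) - 1) * z ^ 2 ∈ A k})
    (hS : S = {0} ∪ ⋃ k : ℕ, A k) :
    S ⊆ Set.Ico 0 (2/((m : ℝ) - 1)) ∪ {(m : ℝ)/((m : ℝ) - 1)} := by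
  have hm1 : (1 : ℝ) < m := by exact_mod_cast (by omega : 1 < m)
  rw [hS]
  refine union_subset ?_ (iUnion_subset fun k => ?_)
  · rw [singleton_subset_iff]
    exact Or.inl ⟨le_rfl, div_pos two_pos (by linarith)⟩
  · exact (decimation_preimages_subset hm1 A hA0 hAk k).trans
      (union_subset_union_left _ Ioo_subset_Ico_self)
end

section
/- With S_m = {0} ∪ ⋃_{k≥0} R_m^{-k}({m/(m-1)}) where R_m(z) = 2mz - m(m-1)z², the sets S_m converge to {0, 1} in the Hausdorff metric as m → ∞. -/
/-!
Every point of `S_m` other than `0` and `m/(m-1)` is a preimage under some iterate of `R_m`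
of the positive number `m/(m-1)`. Since `R_m(w) = m w (2 - (m-1) w)` is positive only for
`0 < w < 2/(m-1)`, positivity propagates backwards along the orbit, and the first point of the
orbit lies in `(0, 2/(m-1))`. Hence `S_m ⊆ [0, 2/(m-1)] ∪ {m/(m-1)}`, with `0, m/(m-1) ∈ S_m`,
so the Hausdorff distance to `{0, 1}` is at most `2/(m-1) → 0`.
-/

open Filter Metric Set

namespace BranchTree

def branchMap (m w : ℝ) : ℝ := 2 * m * w - m * (m - 1) * w ^ 2

variable {m : ℝ}

lemma pos_and_lt_of_branchMap_pos (hm : 1 < m) {w : ℝ} (h : 0 < branchMap m w) :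
    0 < w ∧ w < 2 / (m - 1) := by
  unfold branchMap at h
  have hm1 : 0 < m - 1 := by linarith
  have hw : 0 < w := by
    by_contra! hw
    nlinarith [mul_nonneg (mul_nonneg (by linarith : (0 : ℝ) ≤ m) hm1.le) (sq_nonneg w)]
  refine ⟨hw, ?_⟩
  rw [lt_div_iff₀ hm1]
  nlinarith [mul_pos (by linarith : (0 : ℝ) < m) hw]

lemma pos_of_iterate_branchMap_pos (hm : 1 < m) :
    ∀ (k : ℕ) {x : ℝ}, 0 < (branchMap m)^[k] x → 0 < x
  | 0, _, h => h
  | k + 1, _, h => (pos_and_lt_of_branchMap_pos hm (pos_of_iterate_branchMap_pos hm k h)).1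

lemma lt_of_iterate_succ_branchMap_pos (hm : 1 < m) {k : ℕ} {x : ℝ}
    (h : 0 < (branchMap m)^[k + 1] x) : x < 2 / (m - 1) :=
  (pos_and_lt_of_branchMap_pos hm (pos_of_iterate_branchMap_pos hm k h)).2

lemma iterate_preimages_subset_Icc_union (hm : 1 < m) :
    ({0} ∪ ⋃ k : ℕ, {z : ℝ | (branchMap m)^[k] z = m / (m - 1)}) ⊆
      Icc 0 (2 / (m - 1)) ∪ {m / (m - 1)} := by
  have hm1 : 0 < m - 1 := by linarith
  rintro z (rfl | hz)
  · exact Or.inl ⟨le_rfl, by positivity⟩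
  obtain ⟨k, hk : (branchMap m)^[k] z = m / (m - 1)⟩ := mem_iUnion.mp hz
  rcases k with _ | k
  · exact Or.inr hk
  · have hpos : 0 < (branchMap m)^[k + 1] z := by
      rw [hk]
      exact div_pos (by linarith) hm1
    exact Or.inl ⟨(pos_of_iterate_branchMap_pos hm _ hpos).le,
      (lt_of_iterate_succ_branchMap_pos hm hpos).le⟩

end BranchTree

lemma Metric.hausdorffEDist_pair_le {α : Type*} [PseudoMetricSpace α] {S : Set α} {a b c : α}
    {ε : ℝ} (ha : a ∈ S) (hc : c ∈ S) (hS : S ⊆ closedBall a ε ∪ {c}) (hcb : dist c b ≤ ε) :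
    hausdorffEDist S {a, b} ≤ ENNReal.ofReal ε := by
  have hε : 0 ≤ ε := dist_nonneg.trans hcb
  apply hausdorffEDist_le_of_mem_edist
  · intro x hx
    rcases hS hx with hx | rfl
    · exact ⟨a, Or.inl rfl, (edist_le_ofReal hε).2 hx⟩
    · exact ⟨b, Or.inr rfl, (edist_le_ofReal hε).2 hcb⟩
  · rintro y (rfl | rfl)
    · exact ⟨y, ha, by simp⟩
    · exact ⟨c, hc, (edist_le_ofReal hε).2 (dist_comm y c ▸ hcb)⟩

open BranchTree in
theorem stmt_17 :
    Filter.Tendsto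
      (fun m : ℕ =>
        EMetric.hausdorffEdist
          (({0} ∪ ⋃ k : ℕ,
            {z : ℝ | (fun w : ℝ => 2 * m * w - m * ((m : ℝ) - 1) * w ^ 2)^[k] z
              = (m : ℝ)/((m : ℝ) - 1)}) : Set ℝ)
          ({0, 1} : Set ℝ))
      Filter.atTop (nhds 0) := by
  have hbound : Tendsto (fun m : ℕ => ENNReal.ofReal (2 / ((m : ℝ) - 1))) atTop (nhds 0) := by
    simpa [sub_eq_add_neg] using ENNReal.tendsto_ofReal <| tendsto_const_nhds.div_atTop <|
      tendsto_atTop_add_const_right _ (-1) tendsto_natCast_atTop_atTop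
  refine tendsto_of_tendsto_of_tendsto_of_le_of_le' tendsto_const_nhds hbound
    (Eventually.of_forall fun _ => zero_le) ?_
  filter_upwards [eventually_ge_atTop 2] with m hm2
  have hm : (1 : ℝ) < m := by exact_mod_cast hm2
  have hm1 : 0 < (m : ℝ) - 1 := by linarith
  refine hausdorffEDist_pair_le (mem_union_left _ rfl)
    (mem_union_right _ (mem_iUnion.mpr ⟨0, rfl⟩)) ?_ ?_
  · refine (iterate_preimages_subset_Icc_union hm).trans (union_subset_union_left _ ?_)
    rw [Real.closedBall_eq_Icc, zero_sub, zero_add]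
    exact Icc_subset_Icc (by linarith [div_pos two_pos hm1]) le_rfl
  · rw [Real.dist_eq, show (m : ℝ) / (m - 1) - 1 = 1 / (m - 1) by field_simp; ring,
      abs_of_pos (by positivity)]
    gcongr
    norm_num
end

section
/- For R(z) = 6z - 6z², the iterated preimage set ⋃_{k≥1} R^{-k}({3/2}) is contained in the open interval (0,1), and R^{-1}({3/2}) = {1/2}. -/
open Set

/- Outside `(0, 1)` the map `R z = 6 z (1 - z)` is nonpositive, and `(-∞, 0]` is `R`-invariant,
so no point outside `(0, 1)` ever reaches `3/2 > 0`. The equation `R z = 3/2` reads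
`6 (z - 1/2)^2 = 0`. -/

lemma mapsTo_compl_Ioo_Iic :
    MapsTo (fun w : ℝ => 6 * w - 6 * w ^ 2) (Ioo 0 1)ᶜ (Iic 0) := by
  intro z hz
  simp only [mem_compl_iff, mem_Ioo, not_and_or, not_lt] at hz
  simp only [mem_Iic]
  rcases hz with hz | hz <;> nlinarith

lemma iterate_nonpos_of_notMem_Ioo {k : ℕ} (hk : 1 ≤ k) {z : ℝ} (hz : z ∉ Ioo 0 1) :
    (fun w : ℝ => 6 * w - 6 * w ^ 2)^[k] z ≤ 0 := by
  have hIic : MapsTo (fun w : ℝ => 6 * w - 6 * w ^ 2) (Iic 0) (Iic 0) :=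
    mapsTo_compl_Ioo_Iic.mono_left fun w hw => by simp_all [mem_Iic]
  obtain ⟨n, rfl⟩ := Nat.exists_eq_add_of_le' hk
  rw [Function.iterate_succ_apply]
  exact hIic.iterate n (mapsTo_compl_Ioo_Iic hz)

lemma eq_three_halves_iff (z : ℝ) : 6 * z - 6 * z ^ 2 = 3 / 2 ↔ z = 1 / 2 := by
  have hsq : 6 * z - 6 * z ^ 2 - 3 / 2 = -6 * (z - 1 / 2) ^ 2 := by ring
  constructor
  · intro h
    have hzero : (z - 1 / 2) ^ 2 = 0 := by linarith
    linarith [pow_eq_zero_iff two_ne_zero |>.mp hzero]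
  · rintro rfl
    norm_num

theorem stmt_19 :
    (⋃ k : ℕ, ⋃ _ : 1 ≤ k,
        {z : ℝ | (fun w : ℝ => 6 * w - 6 * w ^ 2)^[k] z = 3/2}) ⊆ Set.Ioo 0 1 ∧
    {z : ℝ | 6 * z - 6 * z ^ 2 = 3/2} = {1/2} := by
  refine ⟨?_, Set.ext eq_three_halves_iff⟩
  simp only [iUnion_subset_iff]
  intro k hk z hz
  by_contra hout
  have hnonpos := iterate_nonpos_of_notMem_Ioo hk hout
  have hreach : _ = (3 : ℝ) / 2 := hz
  linarith
end
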